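/- arXiv:2404.10756 — 5 statements merged into one kernel-verified Lean document; each statement's English description precedes it below -/
import Mathlib

section
/- A divergence-free velocity field transports domains without changing their volume: if div β(t,x) = 0 for all (t,x), Φ(t,·) is injective for every t, and Ω₀ ⊆ ℝ^d is a bounded measurable set, then the Lebesgue measure of Ω(t) = Φ(t,·)''Ω₀ equals the Lebesgue measure of Ω₀ for every t ∈ ℝ. -/
/-! By Jacobi's formula the Jacobian `J(t, x) = det DΦ(t, x)` solves
`∂ₜ J = div β(t, Φ(t, x)) · J = 0`, so `J ≡ J(0, x) = 1`; the change-of-variables formula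
then gives `|Ω(t)| = ∫_{Ω₀} |J(t, ·)| = |Ω₀|`. -/

open MeasureTheory

noncomputable section

/-- Euclidean space `ℝ^d`. -/
abbrev Euc (d : ℕ) : Type := EuclideanSpace ℝ (Fin d)

/-- Divergence of a vector field: the trace of its Fréchet derivative. -/
noncomputable def vdiv {d : ℕ} (w : Euc d → Euc d) (x : Euc d) : ℝ :=
  LinearMap.trace ℝ (Euc d) (fderiv ℝ w x).toLinearMap

namespace Matrix

variable {n R : Type*} [Fintype n] [DecidableEq n] [CommRing R]

theorem sum_det_updateRow_mul (A B : Matrix n n R) :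
    ∑ i, (A.updateRow i ((B * A) i)).det = B.trace * A.det := by
  have hrow : ∀ i, (B * A) i = ∑ k, B i k • A k := fun i => by
    ext j; simp [Matrix.mul_apply, Finset.sum_apply]
  simp only [hrow, det_updateRow_sum, trace, diag, smul_eq_mul, Finset.sum_mul]

variable {𝕜 : Type*} [NontriviallyNormedField 𝕜]

def detRowContinuousAlternating : (n → 𝕜) [⋀^n]→L[𝕜] 𝕜 :=
  { detRowAlternating with cont := continuous_id.matrix_det }

theorem hasDerivAt_det_of_hasDerivAt_mul {A : 𝕜 → Matrix n n 𝕜} {B : Matrix n n 𝕜} {t : 𝕜}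
    (hA : HasDerivAt A (B * A t) t) :
    HasDerivAt (fun s => (A s).det) (B.trace * (A t).det) t := by
  -- `Matrix n n 𝕜` has no norm, so the chain rule is applied in the normed space `n → n → 𝕜`.
  have hA' : HasDerivAt (fun s => (A s : n → n → 𝕜)) (B * A t) t := hA
  have hdet := (detRowContinuousAlternating.hasFDerivAt (A t)).comp_hasDerivAt t hA'
  rw [← sum_det_updateRow_mul]
  exact hdet.congr_deriv (ContinuousMultilinearMap.linearDeriv_apply ..)

end Matrix

namespace ContinuousLinearMap

section

variable {𝕜 E : Type*} [NontriviallyNormedField 𝕜] [CompleteSpace 𝕜]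
  [NormedAddCommGroup E] [NormedSpace 𝕜 E] [FiniteDimensional 𝕜 E]

theorem hasDerivAt_det_of_hasDerivAt_comp {A : 𝕜 → E →L[𝕜] E} {B : E →L[𝕜] E} {t : 𝕜}
    (hA : HasDerivAt A (B ∘L A t) t) :
    HasDerivAt (fun s => (A s).det) (LinearMap.trace 𝕜 E B * (A t).det) t := by
  let b := Module.finBasis 𝕜 E
  let toMatrix : (E →L[𝕜] E) →L[𝕜] (Fin _ → Fin _ → 𝕜) :=
    LinearMap.toContinuousLinearMap
      ((LinearMap.toMatrix b b).toLinearMap ∘ₗ ContinuousLinearMap.coeLM 𝕜)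
  have hM : HasDerivAt (fun s => LinearMap.toMatrix b b (A s))
      (LinearMap.toMatrix b b B * LinearMap.toMatrix b b (A t)) t :=
    (HasFDerivAt.comp_hasDerivAt (l := toMatrix) t toMatrix.hasFDerivAt hA).congr_deriv
      (LinearMap.toMatrix_comp b b b (B : E →ₗ[𝕜] E) (A t))
  simpa only [LinearMap.det_toMatrix, ← LinearMap.trace_eq_matrix_trace]
    using Matrix.hasDerivAt_det_of_hasDerivAt_mul hM

end

section

variable {𝕜 E : Type*} [RCLike 𝕜] [NormedAddCommGroup E] [NormedSpace 𝕜 E] [FiniteDimensional 𝕜 E]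

theorem det_eq_of_hasDerivAt_comp_of_trace_eq_zero {A B : 𝕜 → E →L[𝕜] E}
    (hA : ∀ s, HasDerivAt A (B s ∘L A s) s) (hB : ∀ s, LinearMap.trace 𝕜 E (B s) = 0)
    (s t : 𝕜) : (A s).det = (A t).det := by
  have hdet : ∀ s, HasDerivAt (fun s => (A s).det) 0 s := fun s => by
    simpa only [hB, zero_mul] using hasDerivAt_det_of_hasDerivAt_comp (hA s)
  exact is_const_of_deriv_eq_zero (fun s => (hdet s).differentiableAt) (fun s => (hdet s).deriv) s t

end

end ContinuousLinearMap

theorem MeasureTheory.Measure.addHaar_image_eq_of_abs_det_fderivWithin_eq_one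
    {E : Type*} [NormedAddCommGroup E] [NormedSpace ℝ E] [FiniteDimensional ℝ E]
    [MeasurableSpace E] [BorelSpace E] (μ : Measure E) [μ.IsAddHaarMeasure]
    {f : E → E} {f' : E → E →L[ℝ] E} {s : Set E} (hs : MeasurableSet s)
    (hf' : ∀ x ∈ s, HasFDerivWithinAt f (f' x) s x) (hf : Set.InjOn f s)
    (hdet : ∀ x ∈ s, |(f' x).det| = 1) : μ (f '' s) = μ s := by
  rw [← lintegral_abs_det_fderiv_eq_addHaar_image μ hs hf' hf,
    setLIntegral_congr_fun hs fun x hx => by rw [hdet x hx, ENNReal.ofReal_one]]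
  simp

theorem volume_image_flow_eq_of_divergenceFree_general
    (d : ℕ)
    (β : ℝ → Euc d → Euc d)
    (Φ : ℝ → Euc d → Euc d)
    (hΦ0 : ∀ x, Φ 0 x = x)
    (DΦ : ℝ → Euc d → Euc d →L[ℝ] Euc d)
    (hDΦ : ∀ t x, HasFDerivAt (Φ t) (DΦ t x) x)
    (hDΦt : ∀ t x, HasDerivAt (fun s => DΦ s x)
        ((fderiv ℝ (β t) (Φ t x)).comp (DΦ t x)) t)
    (hdivfree : ∀ (t : ℝ) (x : Euc d), vdiv (β t) x = 0)
    (hΦinj : ∀ t : ℝ, Function.Injective (Φ t))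
    (Ω₀ : Set (Euc d)) (hΩ₀meas : MeasurableSet Ω₀) :
    ∀ t : ℝ, volume (Φ t '' Ω₀) = volume Ω₀ := by
  intro t
  have hD0 : ∀ x, DΦ 0 x = ContinuousLinearMap.id ℝ (Euc d) := fun x =>
    (hDΦ 0 x).unique (by rw [show Φ 0 = id from funext hΦ0]; exact hasFDerivAt_id x)
  have hdet : ∀ x, (DΦ t x).det = 1 := fun x => by
    rw [ContinuousLinearMap.det_eq_of_hasDerivAt_comp_of_trace_eq_zero (hDΦt · x)
      (fun s => hdivfree s (Φ s x)) t 0, hD0, ContinuousLinearMap.det,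
      ContinuousLinearMap.coe_id, LinearMap.det_id]
  exact Measure.addHaar_image_eq_of_abs_det_fderivWithin_eq_one volume hΩ₀meas
    (fun x _ => (hDΦ t x).hasFDerivWithinAt) (hΦinj t).injOn (fun x _ => by rw [hdet, abs_one])

/-- A divergence-free velocity field transports domains without changing their volume:
the Lebesgue measure of `Ω(t) = Φ(t,·)'' Ω₀` equals that of `Ω₀` for every `t`. -/
theorem volume_image_flow_eq_of_divergenceFree
    (d : ℕ) (hd : 1 ≤ d)
    (β : ℝ → Euc d → Euc d)
    (hβ : ContDiff ℝ 1 (fun p : ℝ × Euc d => β p.1 p.2))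
    (Φ : ℝ → Euc d → Euc d)
    (hΦ0 : ∀ x, Φ 0 x = x)
    (hΦt : ∀ t x, HasDerivAt (fun s => Φ s x) (β t (Φ t x)) t)
    (DΦ : ℝ → Euc d → Euc d →L[ℝ] Euc d)
    (hDΦ : ∀ t x, HasFDerivAt (Φ t) (DΦ t x) x)
    (hDΦcont : Continuous fun p : ℝ × Euc d => DΦ p.1 p.2)
    (hDΦt : ∀ t x, HasDerivAt (fun s => DΦ s x)
        ((fderiv ℝ (β t) (Φ t x)).comp (DΦ t x)) t)
    (hdivfree : ∀ (t : ℝ) (x : Euc d), vdiv (β t) x = 0)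
    (hΦinj : ∀ t : ℝ, Function.Injective (Φ t))
    (Ω₀ : Set (Euc d)) (hΩ₀bdd : Bornology.IsBounded Ω₀) (hΩ₀meas : MeasurableSet Ω₀) :
    ∀ t : ℝ, volume (Φ t '' Ω₀) = volume Ω₀ :=
  volume_image_flow_eq_of_divergenceFree_general d β Φ hΦ0 DΦ hDΦ hDΦt hdivfree hΦinj Ω₀ hΩ₀meas
end
end

section
/- Reynolds' transport identity for a product (volume form): for every t ∈ ℝ, the function t ↦ ∫_{Ω(t)} u(t,x) v(t,x) dx is differentiable with derivative ∫_{Ω(t)} ( v(t,x) ∂ₜu(t,x) + u(t,x) ∂ₜv(t,x) + v(t,x) · div( β(t,·) u(t,·) )(x) + u(t,x) · ⟨β(t,x), ∇v(t,x)⟩ ) dx, where ∇v(t,x) is the spatial gradient of v and ⟨·,·⟩ is the Euclidean inner product. -/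
/-!
Pulling back along the flow, `∫_{Ω(t)} u v = ∫_{Ω₀} J(t,y) (u v)(t, Φ(t,y))` with
`J = det DΦ`. Jacobi's formula and `∂ₜDΦ = Dβ ∘ DΦ` give `∂ₜJ = (div β) J`, so by Liouville's
formula `J(t,y) = exp ∫₀ᵗ div β(s, Φ(s,y)) ds > 0` and the absolute value in the change of
variables disappears. On the fixed bounded domain `Ω₀` the integrand is jointly `C¹`, so we may
differentiate under the integral sign; the chain rule produces the material derivatives
`∂ₜu + Du β`, and `div (u β) = u div β + Du β` reassembles the claimed integrand.
-/

open MeasureTheory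

noncomputable section

open Bornology Set Real

section Jacobi

variable {E : Type*} [NormedAddCommGroup E] [NormedSpace ℝ E] [FiniteDimensional ℝ E]

theorem ContinuousLinearMap.differentiable_det :
    Differentiable ℝ (fun L : E →L[ℝ] E => L.det) := by
  classical
  let b := Module.finBasis ℝ E
  have hentry : ∀ i j, Differentiable ℝ
      (fun L : E →L[ℝ] E => LinearMap.toMatrix b b L.toLinearMap i j) := by
    intro i j
    simp only [LinearMap.toMatrix_apply]
    exact (LinearMap.toContinuousLinearMap
      (b.coord i ∘ₗ (ContinuousLinearMap.apply ℝ E (b j)).toLinearMap)).differentiable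
  simp_rw [ContinuousLinearMap.det, ← LinearMap.det_toMatrix b, Matrix.det_apply]
  fun_prop

open Polynomial in
theorem ContinuousLinearMap.hasDerivAt_det_one_add_smul (B : E →L[ℝ] E) :
    HasDerivAt (fun r : ℝ => (1 + r • B).det) (LinearMap.trace ℝ E B.toLinearMap) 0 := by
  classical
  let b := Module.finBasis ℝ E
  let A := LinearMap.toMatrix b b B.toLinearMap
  have hpoly : ∀ r : ℝ, (1 + r • B).det = (Matrix.det (1 + (X : ℝ[X]) • A.map C)).eval r := by
    intro r
    simp [ContinuousLinearMap.det, ← LinearMap.det_toMatrix b, eval_det, A,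
      ← Matrix.smul_eq_mul_diagonal]
  simp_rw [hpoly, LinearMap.trace_eq_matrix_trace ℝ b, ← Matrix.derivative_det_one_add_X_smul]
  exact Polynomial.hasDerivAt _ 0

theorem ContinuousLinearMap.hasDerivAt_det_of_hasDerivAt_comp_s5 {M : ℝ → E →L[ℝ] E}
    {B : E →L[ℝ] E} {t : ℝ} (hM : HasDerivAt M (B ∘L M t) t) :
    HasDerivAt (fun s => (M s).det) (LinearMap.trace ℝ E B.toLinearMap * (M t).det) t := by
  have hdet := (ContinuousLinearMap.differentiable_det (M t)).hasFDerivAt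
  -- `M` has the same velocity at `t` as this line through `M t`, along which `det` factors.
  have hline : HasDerivAt (fun r : ℝ => (1 + r • B) ∘L M t) (B ∘L M t) 0 := by
    simpa using ((hasDerivAt_id (0 : ℝ)).smul_const B).const_add 1 |>.clm_comp
      (hasDerivAt_const 0 (M t))
  have hline_det : HasDerivAt (fun r : ℝ => ((1 + r • B) ∘L M t).det)
      (LinearMap.trace ℝ E B.toLinearMap * (M t).det) 0 := by
    have hsplit : ∀ r : ℝ, ((1 + r • B) ∘L M t).det = (1 + r • B).det * (M t).det :=
      fun r => LinearMap.det_comp _ _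
    simp_rw [hsplit]
    exact (ContinuousLinearMap.hasDerivAt_det_one_add_smul B).mul_const _
  refine (hdet.comp_hasDerivAt t hM).congr_deriv ?_
  exact (hdet.comp_hasDerivAt_of_eq 0 hline (by ext; simp)).unique hline_det

end Jacobi

theorem eq_exp_integral_mul_of_hasDerivAt {f θ : ℝ → ℝ} (hθ : Continuous θ)
    (hf : ∀ s, HasDerivAt f (θ s * f s) s) (a s : ℝ) :
    f s = exp (∫ r in a..s, θ r) * f a := by
  set Θ : ℝ → ℝ := fun s => ∫ r in a..s, θ r
  have hΘ : ∀ s, HasDerivAt Θ (θ s) s := fun s => (hθ.integral_hasStrictDerivAt a s).hasDerivAt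
  have hg : ∀ s, HasDerivAt (fun s => exp (-Θ s) * f s) 0 s := by
    intro s
    exact ((hΘ s).neg.exp.mul (hf s)).congr_deriv (by ring)
  have hconst := is_const_of_deriv_eq_zero (fun s => (hg s).differentiableAt)
    (fun s => (hg s).deriv) s a
  simp only [Θ, intervalIntegral.integral_same, neg_zero, exp_zero, one_mul] at hconst
  rw [← hconst, ← mul_assoc, ← exp_add, add_neg_cancel, exp_zero, one_mul]

section Partial

variable {E F : Type*} [NormedAddCommGroup E] [NormedSpace ℝ E] [NormedAddCommGroup F]
  [NormedSpace ℝ F] {f : ℝ → E → F} {t : ℝ} {x : E}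

theorem DifferentiableAt.apply_right
    (hf : DifferentiableAt ℝ (fun p : ℝ × E => f p.1 p.2) (t, x)) :
    DifferentiableAt ℝ (f t) x :=
  hf.comp x (differentiableAt_const t |>.prodMk differentiableAt_id)

theorem fderiv_eq_fderiv_uncurry_comp_inr
    (hf : DifferentiableAt ℝ (fun p : ℝ × E => f p.1 p.2) (t, x)) :
    fderiv ℝ (f t) x = (fderiv ℝ (fun p : ℝ × E => f p.1 p.2) (t, x)).comp
      (ContinuousLinearMap.inr ℝ ℝ E) :=
  (hf.hasFDerivAt.comp x (hasFDerivAt_prodMk_right t x)).fderiv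

theorem deriv_eq_fderiv_uncurry_apply_one_zero
    (hf : DifferentiableAt ℝ (fun p : ℝ × E => f p.1 p.2) (t, x)) :
    deriv (fun s => f s x) t = fderiv ℝ (fun p : ℝ × E => f p.1 p.2) (t, x) (1, 0) := by
  have hpath : HasDerivAt (fun s : ℝ => (s, x)) ((1 : ℝ), (0 : E)) t :=
    (hasDerivAt_id t).prodMk (hasDerivAt_const t x)
  exact (hf.hasFDerivAt.comp_hasDerivAt t hpath).deriv

theorem fderiv_uncurry_apply_one
    (hf : DifferentiableAt ℝ (fun p : ℝ × E => f p.1 p.2) (t, x)) (w : E) :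
    fderiv ℝ (fun p : ℝ × E => f p.1 p.2) (t, x) (1, w)
      = deriv (fun s => f s x) t + fderiv ℝ (f t) x w := by
  rw [deriv_eq_fderiv_uncurry_apply_one_zero hf, fderiv_eq_fderiv_uncurry_comp_inr hf,
    ContinuousLinearMap.comp_apply, ContinuousLinearMap.inr_apply, ← map_add, Prod.mk_add_mk,
    add_zero, zero_add]

theorem HasDerivAt.apply_of_differentiableAt_uncurry {γ : ℝ → E} {γ' : E}
    (hγ : HasDerivAt γ γ' t) (hf : DifferentiableAt ℝ (fun p : ℝ × E => f p.1 p.2) (t, γ t)) :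
    HasDerivAt (fun s => f s (γ s)) (fderiv ℝ (fun p : ℝ × E => f p.1 p.2) (t, γ t) (1, γ')) t := by
  have hpath : HasDerivAt (fun s => (s, γ s)) ((1 : ℝ), γ') t := (hasDerivAt_id t).prodMk hγ
  exact hf.hasFDerivAt.comp_hasDerivAt t hpath

end Partial

theorem vdiv_smul {d : ℕ} {f : Euc d → ℝ} {w : Euc d → Euc d} {x : Euc d}
    (hf : DifferentiableAt ℝ f x) (hw : DifferentiableAt ℝ w x) :
    vdiv (fun y => f y • w y) x = f x * vdiv w x + fderiv ℝ f x (w x) := by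
  have hfw : HasFDerivAt (fun y => f y • w y)
      (f x • fderiv ℝ w x + (fderiv ℝ f x).smulRight (w x)) x :=
    hf.hasFDerivAt.smul hw.hasFDerivAt
  rw [vdiv, hfw.fderiv, ContinuousLinearMap.toLinearMap_add, map_add,
    ContinuousLinearMap.toLinearMap_smul, map_smul, smul_eq_mul, vdiv]
  exact congrArg _ (LinearMap.trace_smulRight _ _)

theorem integral_image_eq_integral_det_smul_of_det_pos {E F : Type*} [NormedAddCommGroup E]
    [NormedSpace ℝ E] [FiniteDimensional ℝ E] [MeasurableSpace E] [BorelSpace E] (μ : Measure E)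
    [μ.IsAddHaarMeasure] [NormedAddCommGroup F] [NormedSpace ℝ F] {s : Set E} {f : E → E}
    {f' : E → E →L[ℝ] E} (hs : MeasurableSet s) (hf' : ∀ x ∈ s, HasFDerivWithinAt f (f' x) s x)
    (hf : InjOn f s) (hpos : ∀ x ∈ s, 0 < (f' x).det) (g : E → F) :
    ∫ x in f '' s, g x ∂μ = ∫ x in s, (f' x).det • g (f x) ∂μ := by
  rw [integral_image_eq_integral_abs_det_fderiv_smul μ hs hf' hf g]
  exact setIntegral_congr_fun hs fun x hx => by rw [abs_of_pos (hpos x hx)]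

theorem hasDerivAt_setIntegral_of_continuous {X G : Type*} [MetricSpace X] [ProperSpace X]
    [MeasurableSpace X] [BorelSpace X] {μ : Measure X} [IsFiniteMeasureOnCompacts μ]
    [NormedAddCommGroup G] [NormedSpace ℝ G] {F F' : ℝ → X → G}
    (hF : Continuous fun p : ℝ × X => F p.1 p.2) (hF' : Continuous fun p : ℝ × X => F' p.1 p.2)
    (hderiv : ∀ s y, HasDerivAt (F · y) (F' s y) s) {K : Set X} (hK : IsBounded K)
    (hKm : MeasurableSet K) (t : ℝ) :
    HasDerivAt (fun s => ∫ y in K, F s y ∂μ) (∫ y in K, F' t y ∂μ) t := by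
  have hKc : IsCompact (closure K) := hK.isCompact_closure
  obtain ⟨C, hC⟩ := ((isCompact_closedBall t 1).prod hKc).exists_bound_of_continuousOn
    hF'.continuousOn
  have hslice : ∀ {H : ℝ → X → G}, Continuous (fun p : ℝ × X => H p.1 p.2) → ∀ s,
      Continuous (H s) := fun hH s => hH.comp (Continuous.prodMk_right s)
  refine (hasDerivAt_integral_of_dominated_loc_of_deriv_le (bound := fun _ => C)
    (Metric.ball_mem_nhds t one_pos)
    (Filter.Eventually.of_forall fun s => (hslice hF s).aestronglyMeasurable)
    (((hslice hF t).continuousOn.integrableOn_compact hKc).mono_set subset_closure)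
    (hslice hF' t).aestronglyMeasurable ?_ (integrableOn_const (hK.measure_lt_top).ne)
    (Filter.Eventually.of_forall fun y s _ => hderiv s y)).2
  filter_upwards [ae_restrict_mem hKm] with y hy s hs
  exact hC (s, y) ⟨Metric.ball_subset_closedBall hs, subset_closure hy⟩

theorem continuous_vdiv_of_contDiff {d : ℕ} {β : ℝ → Euc d → Euc d}
    (hβ : ContDiff ℝ 1 (fun p : ℝ × Euc d => β p.1 p.2)) :
    Continuous fun p : ℝ × Euc d => vdiv (β p.1) p.2 := by
  have htrace : Continuous fun L : Euc d →L[ℝ] Euc d => LinearMap.trace ℝ _ L.toLinearMap :=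
    (LinearMap.trace ℝ (Euc d) ∘ₗ ContinuousLinearMap.coeLM ℝ).continuous_of_finiteDimensional
  simp_rw [vdiv, fderiv_eq_fderiv_uncurry_comp_inr (hβ.differentiable one_ne_zero _)]
  exact htrace.comp ((hβ.continuous_fderiv one_ne_zero).clm_comp continuous_const)

section Flow

variable {d : ℕ} {β Φ : ℝ → Euc d → Euc d} {DΦ : ℝ → Euc d → Euc d →L[ℝ] Euc d}

theorem hasDerivAt_det_flow
    (hDΦt : ∀ t x, HasDerivAt (fun s => DΦ s x) ((fderiv ℝ (β t) (Φ t x)).comp (DΦ t x)) t)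
    (t : ℝ) (x : Euc d) :
    HasDerivAt (fun s => (DΦ s x).det) (vdiv (β t) (Φ t x) * (DΦ t x).det) t :=
  ContinuousLinearMap.hasDerivAt_det_of_hasDerivAt_comp_s5 (hDΦt t x)

theorem det_flow_pos (hβ : ContDiff ℝ 1 (fun p : ℝ × Euc d => β p.1 p.2))
    (hΦ : Continuous fun p : ℝ × Euc d => Φ p.1 p.2) (hΦ0 : ∀ x, Φ 0 x = x)
    (hDΦ : ∀ t x, HasFDerivAt (Φ t) (DΦ t x) x)
    (hDΦt : ∀ t x, HasDerivAt (fun s => DΦ s x) ((fderiv ℝ (β t) (Φ t x)).comp (DΦ t x)) t)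
    (t : ℝ) (x : Euc d) : 0 < (DΦ t x).det := by
  have hDΦ0 : DΦ 0 x = ContinuousLinearMap.id ℝ (Euc d) :=
    (hDΦ 0 x).unique (by rw [show Φ 0 = id from funext hΦ0]; exact hasFDerivAt_id x)
  have hdiv : Continuous fun s => vdiv (β s) (Φ s x) :=
    (continuous_vdiv_of_contDiff hβ).comp
      (continuous_id.prodMk (hΦ.comp (continuous_id.prodMk continuous_const)))
  have hdet0 : (DΦ 0 x).det = 1 := by rw [hDΦ0]; exact LinearMap.det_id
  rw [eq_exp_integral_mul_of_hasDerivAt hdiv (hasDerivAt_det_flow hDΦt · x) 0 t, hdet0, mul_one]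
  exact exp_pos _

theorem hasDerivAt_setIntegral_det_mul_comp_flow
    (hβ : ContDiff ℝ 1 (fun p : ℝ × Euc d => β p.1 p.2))
    (hΦ : Continuous fun p : ℝ × Euc d => Φ p.1 p.2)
    (hΦt : ∀ t x, HasDerivAt (fun s => Φ s x) (β t (Φ t x)) t)
    (hDΦcont : Continuous fun p : ℝ × Euc d => DΦ p.1 p.2)
    (hDΦt : ∀ t x, HasDerivAt (fun s => DΦ s x) ((fderiv ℝ (β t) (Φ t x)).comp (DΦ t x)) t)
    {Ω₀ : Set (Euc d)} (hΩ₀bdd : IsBounded Ω₀) (hΩ₀meas : MeasurableSet Ω₀) {w : ℝ → Euc d → ℝ}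
    (hw : ContDiff ℝ 1 (fun p : ℝ × Euc d => w p.1 p.2)) (t : ℝ) :
    HasDerivAt (fun s => ∫ y in Ω₀, (DΦ s y).det * w s (Φ s y))
      (∫ y in Ω₀, (DΦ t y).det * (vdiv (β t) (Φ t y) * w t (Φ t y)
        + fderiv ℝ (fun p : ℝ × Euc d => w p.1 p.2) (t, Φ t y) (1, β t (Φ t y)))) t := by
  have hflow : Continuous fun p : ℝ × Euc d => (p.1, Φ p.1 p.2) := continuous_fst.prodMk hΦ
  have hJ := ContinuousLinearMap.continuous_det.comp hDΦcont
  have hwΦ := hw.continuous.comp hflow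
  have hβΦ : Continuous fun p : ℝ × Euc d => ((1 : ℝ), β p.1 (Φ p.1 p.2)) :=
    continuous_const.prodMk (hβ.continuous.comp hflow)
  refine hasDerivAt_setIntegral_of_continuous
    (F := fun s y => (DΦ s y).det * w s (Φ s y))
    (F' := fun s y => (DΦ s y).det * (vdiv (β s) (Φ s y) * w s (Φ s y)
      + fderiv ℝ (fun p : ℝ × Euc d => w p.1 p.2) (s, Φ s y) (1, β s (Φ s y))))
    (hJ.mul hwΦ)
    (hJ.mul ((((continuous_vdiv_of_contDiff hβ).comp hflow).mul hwΦ).add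
      (((hw.continuous_fderiv one_ne_zero).comp hflow).clm_apply hβΦ)))
    (fun s y => ?_) hΩ₀bdd hΩ₀meas t
  have hwy := (hΦt s y).apply_of_differentiableAt_uncurry (hw.differentiable one_ne_zero _)
  exact ((hasDerivAt_det_flow hDΦt s y).mul hwy).congr_deriv (by ring)

end Flow

theorem reynolds_transport_product_general
    (d : ℕ)
    (β : ℝ → Euc d → Euc d)
    (hβ : ContDiff ℝ 1 (fun p : ℝ × Euc d => β p.1 p.2))
    (Φ : ℝ → Euc d → Euc d)
    (hΦ0 : ∀ x, Φ 0 x = x)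
    (hΦt : ∀ t x, HasDerivAt (fun s => Φ s x) (β t (Φ t x)) t)
    (hΦC1 : ContDiff ℝ 1 (fun p : ℝ × Euc d => Φ p.1 p.2))
    (hΦinj : ∀ t : ℝ, Function.Injective (Φ t))
    (DΦ : ℝ → Euc d → Euc d →L[ℝ] Euc d)
    (hDΦ : ∀ t x, HasFDerivAt (Φ t) (DΦ t x) x)
    (hDΦcont : Continuous fun p : ℝ × Euc d => DΦ p.1 p.2)
    (hDΦt : ∀ t x, HasDerivAt (fun s => DΦ s x)
        ((fderiv ℝ (β t) (Φ t x)).comp (DΦ t x)) t)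
    (Ω₀ : Set (Euc d)) (hΩ₀bdd : Bornology.IsBounded Ω₀) (hΩ₀meas : MeasurableSet Ω₀)
    (u v : ℝ → Euc d → ℝ)
    (hu : ContDiff ℝ 1 (fun p : ℝ × Euc d => u p.1 p.2))
    (hv : ContDiff ℝ 1 (fun p : ℝ × Euc d => v p.1 p.2)) :
    ∀ t : ℝ,
      HasDerivAt (fun s => ∫ x in Φ s '' Ω₀, u s x * v s x)
        (∫ x in Φ t '' Ω₀,
          (v t x * deriv (fun s => u s x) t
            + u t x * deriv (fun s => v s x) t
            + v t x * vdiv (fun y => u t y • β t y) x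
            + u t x * (inner ℝ (β t x) (gradient (v t) x) : ℝ))) t := by
  intro t
  have hcov : ∀ s (ψ : Euc d → ℝ),
      ∫ x in Φ s '' Ω₀, ψ x = ∫ y in Ω₀, (DΦ s y).det * ψ (Φ s y) := fun s =>
    integral_image_eq_integral_det_smul_of_det_pos volume hΩ₀meas
      (fun y _ => (hDΦ s y).hasFDerivWithinAt) (hΦinj s).injOn
      (fun y _ => det_flow_pos hβ hΦC1.continuous hΦ0 hDΦ hDΦt s y)
  simp_rw [hcov]
  have hu' := hu.differentiable one_ne_zero
  have hv' := hv.differentiable one_ne_zero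
  refine (hasDerivAt_setIntegral_det_mul_comp_flow hβ hΦC1.continuous hΦt hDΦcont hDΦt hΩ₀bdd
    hΩ₀meas (w := fun s x => u s x * v s x) (hu.mul hv) t).congr_deriv
    (integral_congr_ae (Filter.Eventually.of_forall fun y => ?_))
  dsimp only
  rw [fderiv_fun_mul (hu' _) (hv' _), add_apply,
    smul_apply, smul_apply, smul_eq_mul, smul_eq_mul,
    fderiv_uncurry_apply_one (hu' _), fderiv_uncurry_apply_one (hv' _),
    vdiv_smul (hu' _).apply_right (hβ.differentiable one_ne_zero _).apply_right,
    real_inner_comm, inner_gradient_left]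
  ring

/-- Reynolds' transport identity for a product (volume form):
`d/dt ∫_{Ω(t)} u v dx = ∫_{Ω(t)} (v ∂ₜu + u ∂ₜv + v div(β u) + u ⟨β, ∇v⟩) dx`. -/
theorem reynolds_transport_product
    (d : ℕ) (hd : 1 ≤ d)
    (β : ℝ → Euc d → Euc d)
    (hβ : ContDiff ℝ 1 (fun p : ℝ × Euc d => β p.1 p.2))
    (hβbdd : ∃ C : ℝ, ∀ p : ℝ × Euc d,
      ‖fderiv ℝ (fun q : ℝ × Euc d => β q.1 q.2) p‖ ≤ C)
    (Φ : ℝ → Euc d → Euc d)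
    (hΦ0 : ∀ x, Φ 0 x = x)
    (hΦt : ∀ t x, HasDerivAt (fun s => Φ s x) (β t (Φ t x)) t)
    (hΦC1 : ContDiff ℝ 1 (fun p : ℝ × Euc d => Φ p.1 p.2))
    (hΦinj : ∀ t : ℝ, Function.Injective (Φ t))
    (DΦ : ℝ → Euc d → Euc d →L[ℝ] Euc d)
    (hDΦ : ∀ t x, HasFDerivAt (Φ t) (DΦ t x) x)
    (hDΦcont : Continuous fun p : ℝ × Euc d => DΦ p.1 p.2)
    (hDΦt : ∀ t x, HasDerivAt (fun s => DΦ s x)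
        ((fderiv ℝ (β t) (Φ t x)).comp (DΦ t x)) t)
    (Ω₀ : Set (Euc d)) (hΩ₀bdd : Bornology.IsBounded Ω₀) (hΩ₀meas : MeasurableSet Ω₀)
    (u v : ℝ → Euc d → ℝ)
    (hu : ContDiff ℝ 1 (fun p : ℝ × Euc d => u p.1 p.2))
    (hv : ContDiff ℝ 1 (fun p : ℝ × Euc d => v p.1 p.2))
    (hubdd : ∃ C : ℝ, ∀ p : ℝ × Euc d,
      |u p.1 p.2| ≤ C ∧ ‖fderiv ℝ (fun q : ℝ × Euc d => u q.1 q.2) p‖ ≤ C)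
    (hvbdd : ∃ C : ℝ, ∀ p : ℝ × Euc d,
      |v p.1 p.2| ≤ C ∧ ‖fderiv ℝ (fun q : ℝ × Euc d => v q.1 q.2) p‖ ≤ C) :
    ∀ t : ℝ,
      HasDerivAt (fun s => ∫ x in Φ s '' Ω₀, u s x * v s x)
        (∫ x in Φ t '' Ω₀,
          (v t x * deriv (fun s => u s x) t
            + u t x * deriv (fun s => v s x) t
            + v t x * vdiv (fun y => u t y • β t y) x
            + u t x * (inner ℝ (β t x) (gradient (v t) x) : ℝ))) t :=
  reynolds_transport_product_general d β hβ Φ hΦ0 hΦt hΦC1 hΦinj DΦ hDΦ hDΦcont hDΦt Ω₀ hΩ₀bdd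
    hΩ₀meas u v hu hv
end
end

section
/- Local discrete mass conservation of the conservative space-time CutFEM scheme: suppose the discrete solution u_h satisfies the scheme equation A^n(u_h, v) + S^n(u_h, v) = L^n(v) for the constant test function v ≡ 1, whose elementwise representative on every mesh element is the constant polynomial 1. Since ∂ₜ1 = 0, ∇1 = 0, and all jumps of normal derivatives of orders i = 1, …, m of the constant function vanish on every face, it follows that ∫_{Ω(t_n)} u_h(t_n,x) dx − ∫_{Ω(t_{n−1})} u_h^-(x) dx = ∫_{t_{n−1}}^{t_n} ∫_{Ω(t)} f(t,x) dx dt. -/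
open MeasureTheory

noncomputable section

/-- First-order directional derivative in the (fixed) direction `n`. -/
noncomputable def dirDeriv {d : ℕ} (n : Euc d) (g : Euc d → ℝ) : Euc d → ℝ :=
  fun x => fderiv ℝ g x n

/-- `i`-th order directional derivative in the direction `n`. -/
noncomputable def dirDerivIter {d : ℕ} (n : Euc d) (i : ℕ) (g : Euc d → ℝ) : Euc d → ℝ :=
  (dirDeriv n)^[i] g

theorem cutfem_local_mass_conservation_general
    (d : ℕ)
    (tnm1 tn : ℝ)
    -- evolving family of bounded measurable domains
    (Ω : ℝ → Set (Euc d))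
    -- bounded continuous velocity field
    (β : ℝ → Euc d → Euc d)
    (D : ℝ)
    -- source term, integrable over the space-time region
    (f : ℝ → Euc d → ℝ)
    -- data from the previous slab
    (uhm : Euc d → ℝ)
    -- discrete solution, C¹ on each space-time element, integrable at tₙ
    (uh : ℝ → Euc d → ℝ)
    -- faces, normals, face measures, stabilization parameters
    (ι : Type) (𝓕 : Finset ι) (nF : ι → Euc d)
    (σF : ι → Measure (Euc d))
    (m : ℕ) (τ : ι → ℕ → ℝ) (h : ℝ)
    -- the two smooth elementwise representatives of u_h on the elements sharing each face
    (uhRep : ι → Fin 2 → ℝ → Euc d → ℝ)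
    -- the constant test function v ≡ 1, with elementwise representatives ≡ 1
    (v : ℝ → Euc d → ℝ) (hv : ∀ (t : ℝ) (x : Euc d), v t x = 1)
    (vRep : ι → Fin 2 → ℝ → Euc d → ℝ)
    (hvRep : ∀ (F : ι) (j : Fin 2) (t : ℝ) (x : Euc d), vRep F j t x = 1)
    -- the scheme equation Aⁿ(u_h, v) + Sⁿ(u_h, v) = Lⁿ(v) for this v
    (hscheme :
      ((∫ x in Ω tn, uh tn x * v tn x)
        - (∫ t in tnm1..tn, ∫ x in Ω t, uh t x * deriv (fun s => v s x) t)
        - (∫ t in tnm1..tn, ∫ x in Ω t,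
            uh t x * (inner ℝ (β t x) (gradient (v t) x) : ℝ))
        + (∫ t in tnm1..tn, ∫ x in Ω t,
            D * (inner ℝ (gradient (uh t) x) (gradient (v t) x) : ℝ)))
      + (∫ t in tnm1..tn, ∑ F ∈ 𝓕, ∑ i ∈ Finset.Icc 1 m,
          τ F i * h ^ (2 * i - 1) *
            ∫ x, (dirDerivIter (nF F) i (uhRep F 0 t) x
                    - dirDerivIter (nF F) i (uhRep F 1 t) x)
                * (dirDerivIter (nF F) i (vRep F 0 t) x
                    - dirDerivIter (nF F) i (vRep F 1 t) x) ∂(σF F))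
      = (∫ x in Ω tnm1, uhm x * v tnm1 x)
        + ∫ t in tnm1..tn, ∫ x in Ω t, f t x * v t x) :
    (∫ x in Ω tn, uh tn x) - (∫ x in Ω tnm1, uhm x)
      = ∫ t in tnm1..tn, ∫ x in Ω t, f t x := by
  obtain rfl : v = fun _ _ => 1 := funext₂ hv
  obtain rfl : vRep = fun _ _ _ _ => 1 := funext fun F => funext fun j => funext₂ (hvRep F j)
  -- both representatives of `v` coincide, so every jump in the stabilization is `sub_self`
  simp only [mul_one, deriv_const', gradient_fun_const, inner_zero_right, mul_zero, sub_self,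
    integral_zero, intervalIntegral.integral_zero, Finset.sum_const_zero, sub_zero,
    add_zero] at hscheme
  linarith

/-- Local discrete mass conservation of the conservative space-time CutFEM scheme:
testing the scheme `Aⁿ(u_h,v) + Sⁿ(u_h,v) = Lⁿ(v)` with the constant function `v ≡ 1`
(whose elementwise representative on every element is the constant polynomial 1) yields
`∫_{Ω(tₙ)} u_h − ∫_{Ω(tₙ₋₁)} u_h⁻ = ∫_{Iₙ} ∫_{Ω(t)} f`. -/
theorem cutfem_local_mass_conservation
    (d : ℕ) (hd : 1 ≤ d)
    (tnm1 tn : ℝ) (htn : tnm1 < tn)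
    -- evolving family of bounded measurable domains
    (Ω : ℝ → Set (Euc d))
    (hΩ : ∀ t ∈ Set.Icc tnm1 tn, Bornology.IsBounded (Ω t) ∧ MeasurableSet (Ω t))
    -- bounded continuous velocity field
    (β : ℝ → Euc d → Euc d)
    (hβcont : Continuous fun p : ℝ × Euc d => β p.1 p.2)
    (hβbdd : ∃ C : ℝ, ∀ (t : ℝ) (x : Euc d), ‖β t x‖ ≤ C)
    (D : ℝ) (hD : 0 < D)
    -- source term, integrable over the space-time region
    (f : ℝ → Euc d → ℝ)
    (hf : IntegrableOn (fun p : ℝ × Euc d => f p.1 p.2)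
      {p : ℝ × Euc d | p.1 ∈ Set.Icc tnm1 tn ∧ p.2 ∈ Ω p.1})
    -- data from the previous slab
    (uhm : Euc d → ℝ) (huhm : IntegrableOn uhm (Ω tnm1))
    -- discrete solution, C¹ on each space-time element, integrable at tₙ
    (uh : ℝ → Euc d → ℝ)
    (𝓚 : Finset (Set (ℝ × Euc d)))
    (huhC1 : ∀ K ∈ 𝓚, ContDiffOn ℝ 1 (fun p : ℝ × Euc d => uh p.1 p.2) K)
    (huhint : IntegrableOn (uh tn) (Ω tn))
    -- faces, normals, face measures, stabilization parameters
    (ι : Type) (𝓕 : Finset ι) (nF : ι → Euc d) (hnF : ∀ F, ‖nF F‖ = 1)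
    (σF : ι → Measure (Euc d))
    (m : ℕ) (τ : ι → ℕ → ℝ) (hτ : ∀ F i, 0 < τ F i) (h : ℝ) (hh : 0 < h)
    -- the two smooth elementwise representatives of u_h on the elements sharing each face
    (uhRep : ι → Fin 2 → ℝ → Euc d → ℝ)
    -- the constant test function v ≡ 1, with elementwise representatives ≡ 1
    (v : ℝ → Euc d → ℝ) (hv : ∀ (t : ℝ) (x : Euc d), v t x = 1)
    (vRep : ι → Fin 2 → ℝ → Euc d → ℝ)
    (hvRep : ∀ (F : ι) (j : Fin 2) (t : ℝ) (x : Euc d), vRep F j t x = 1)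
    -- the scheme equation Aⁿ(u_h, v) + Sⁿ(u_h, v) = Lⁿ(v) for this v
    (hscheme :
      ((∫ x in Ω tn, uh tn x * v tn x)
        - (∫ t in tnm1..tn, ∫ x in Ω t, uh t x * deriv (fun s => v s x) t)
        - (∫ t in tnm1..tn, ∫ x in Ω t,
            uh t x * (inner ℝ (β t x) (gradient (v t) x) : ℝ))
        + (∫ t in tnm1..tn, ∫ x in Ω t,
            D * (inner ℝ (gradient (uh t) x) (gradient (v t) x) : ℝ)))
      + (∫ t in tnm1..tn, ∑ F ∈ 𝓕, ∑ i ∈ Finset.Icc 1 m,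
          τ F i * h ^ (2 * i - 1) *
            ∫ x, (dirDerivIter (nF F) i (uhRep F 0 t) x
                    - dirDerivIter (nF F) i (uhRep F 1 t) x)
                * (dirDerivIter (nF F) i (vRep F 0 t) x
                    - dirDerivIter (nF F) i (vRep F 1 t) x) ∂(σF F))
      = (∫ x in Ω tnm1, uhm x * v tnm1 x)
        + ∫ t in tnm1..tn, ∫ x in Ω t, f t x * v t x) :
    (∫ x in Ω tn, uh tn x) - (∫ x in Ω tnm1, uhm x)
      = ∫ t in tnm1..tn, ∫ x in Ω t, f t x :=
  cutfem_local_mass_conservation_general d tnm1 tn Ω β D f uhm uh ι 𝓕 nF σF m τ h uhRep v hv vRep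
    hvRep hscheme
end
end

section
/- Discrete mass conservation is preserved under quadrature in time: suppose the discrete solution u_h satisfies the quadrature scheme equation A_h^n(u_h, v) + S_h^n(u_h, v) = L_h^n(v) for the constant test function v ≡ 1, whose elementwise representative on every mesh element is the constant polynomial 1. As ∂ₜ1 = 0, ∇1 = 0, and all jumps of normal derivatives of the constant function vanish, it follows that ∫_{Ω(t_n)} u_h(t_n,x) dx − ∫_{Ω(t_{n−1})} u_h^-(x) dx = Σ_{q=1}^{N_t} ω_q ∫_{Ω(t_q)} f(t_q,x) dx. -/
open MeasureTheory

noncomputable section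

theorem cutfem_quadrature_mass_conservation_general
    (d : ℕ)
    (tnm1 tn : ℝ)
    -- quadrature points in Iₙ with weights
    (Nt : ℕ) (tq : Fin Nt → ℝ) (ω : Fin Nt → ℝ)
    -- evolving family of bounded measurable domains
    (Ω : ℝ → Set (Euc d))
    -- bounded continuous velocity field
    (β : ℝ → Euc d → Euc d)
    (D : ℝ)
    -- source term, integrable on Ω(t_q) for each quadrature point
    (f : ℝ → Euc d → ℝ)
    -- data from the previous slab
    (uhm : Euc d → ℝ)
    -- discrete solution, C¹ on each space-time element, integrable at tₙ
    (uh : ℝ → Euc d → ℝ)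
    -- faces, normals, face measures, stabilization parameters
    (ι : Type) (𝓕 : Finset ι) (nF : ι → Euc d)
    (σF : ι → Measure (Euc d))
    (m : ℕ) (τ : ι → ℕ → ℝ) (h : ℝ)
    -- the two smooth elementwise representatives of u_h on the elements sharing each face
    (uhRep : ι → Fin 2 → ℝ → Euc d → ℝ)
    -- the constant test function v ≡ 1, with elementwise representatives ≡ 1
    (v : ℝ → Euc d → ℝ) (hv : ∀ (t : ℝ) (x : Euc d), v t x = 1)
    (vRep : ι → Fin 2 → ℝ → Euc d → ℝ)
    (hvRep : ∀ (F : ι) (j : Fin 2) (t : ℝ) (x : Euc d), vRep F j t x = 1)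
    -- the quadrature scheme equation A_hⁿ(u_h, v) + S_hⁿ(u_h, v) = L_hⁿ(v) for this v
    (hscheme :
      ((∫ x in Ω tn, uh tn x * v tn x)
        - (∑ q, ω q * ∫ x in Ω (tq q), uh (tq q) x * deriv (fun s => v s x) (tq q))
        - (∑ q, ω q * ∫ x in Ω (tq q),
            uh (tq q) x * (inner ℝ (β (tq q) x) (gradient (v (tq q)) x) : ℝ))
        + (∑ q, ω q * ∫ x in Ω (tq q),
            D * (inner ℝ (gradient (uh (tq q)) x) (gradient (v (tq q)) x) : ℝ)))
      + (∑ q, ω q * ∑ F ∈ 𝓕, ∑ i ∈ Finset.Icc 1 m,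
          τ F i * h ^ (2 * i - 1) *
            ∫ x, (dirDerivIter (nF F) i (uhRep F 0 (tq q)) x
                    - dirDerivIter (nF F) i (uhRep F 1 (tq q)) x)
                * (dirDerivIter (nF F) i (vRep F 0 (tq q)) x
                    - dirDerivIter (nF F) i (vRep F 1 (tq q)) x) ∂(σF F))
      = (∫ x in Ω tnm1, uhm x * v tnm1 x)
        + ∑ q, ω q * ∫ x in Ω (tq q), f (tq q) x * v (tq q) x) :
    (∫ x in Ω tn, uh tn x) - (∫ x in Ω tnm1, uhm x)
      = ∑ q, ω q * ∫ x in Ω (tq q), f (tq q) x := by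
  have hv_one : v = fun _ _ => 1 := by funext t x; exact hv t x
  have hvRep_one : vRep = fun _ _ _ _ => 1 := by funext F j t x; exact hvRep F j t x
  subst hv_one hvRep_one
  -- the face jumps of the test function vanish as differences of identical representatives
  simp only [deriv_const, gradient_fun_const, inner_zero_right, mul_zero, mul_one, sub_self,
    integral_zero, Finset.sum_const_zero, sub_zero, add_zero] at hscheme
  linarith

/-- Discrete mass conservation is preserved under quadrature in time:
testing the quadrature scheme `A_hⁿ(u_h,v) + S_hⁿ(u_h,v) = L_hⁿ(v)` with the constant
function `v ≡ 1` yields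
`∫_{Ω(tₙ)} u_h − ∫_{Ω(tₙ₋₁)} u_h⁻ = Σ_q ω_q ∫_{Ω(t_q)} f(t_q,·)`. -/
theorem cutfem_quadrature_mass_conservation
    (d : ℕ) (hd : 1 ≤ d)
    (tnm1 tn : ℝ) (htn : tnm1 < tn)
    -- quadrature points in Iₙ with weights
    (Nt : ℕ) (tq : Fin Nt → ℝ) (htq : ∀ q, tq q ∈ Set.Icc tnm1 tn) (ω : Fin Nt → ℝ)
    -- evolving family of bounded measurable domains
    (Ω : ℝ → Set (Euc d))
    (hΩ : ∀ t ∈ Set.Icc tnm1 tn, Bornology.IsBounded (Ω t) ∧ MeasurableSet (Ω t))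
    -- bounded continuous velocity field
    (β : ℝ → Euc d → Euc d)
    (hβcont : Continuous fun p : ℝ × Euc d => β p.1 p.2)
    (hβbdd : ∃ C : ℝ, ∀ (t : ℝ) (x : Euc d), ‖β t x‖ ≤ C)
    (D : ℝ) (hD : 0 < D)
    -- source term, integrable on Ω(t_q) for each quadrature point
    (f : ℝ → Euc d → ℝ)
    (hf : ∀ q, IntegrableOn (f (tq q)) (Ω (tq q)))
    -- data from the previous slab
    (uhm : Euc d → ℝ) (huhm : IntegrableOn uhm (Ω tnm1))
    -- discrete solution, C¹ on each space-time element, integrable at tₙ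
    (uh : ℝ → Euc d → ℝ)
    (𝓚 : Finset (Set (ℝ × Euc d)))
    (huhC1 : ∀ K ∈ 𝓚, ContDiffOn ℝ 1 (fun p : ℝ × Euc d => uh p.1 p.2) K)
    (huhint : IntegrableOn (uh tn) (Ω tn))
    -- faces, normals, face measures, stabilization parameters
    (ι : Type) (𝓕 : Finset ι) (nF : ι → Euc d) (hnF : ∀ F, ‖nF F‖ = 1)
    (σF : ι → Measure (Euc d))
    (m : ℕ) (τ : ι → ℕ → ℝ) (hτ : ∀ F i, 0 < τ F i) (h : ℝ) (hh : 0 < h)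
    -- the two smooth elementwise representatives of u_h on the elements sharing each face
    (uhRep : ι → Fin 2 → ℝ → Euc d → ℝ)
    -- the constant test function v ≡ 1, with elementwise representatives ≡ 1
    (v : ℝ → Euc d → ℝ) (hv : ∀ (t : ℝ) (x : Euc d), v t x = 1)
    (vRep : ι → Fin 2 → ℝ → Euc d → ℝ)
    (hvRep : ∀ (F : ι) (j : Fin 2) (t : ℝ) (x : Euc d), vRep F j t x = 1)
    -- the quadrature scheme equation A_hⁿ(u_h, v) + S_hⁿ(u_h, v) = L_hⁿ(v) for this v
    (hscheme :
      ((∫ x in Ω tn, uh tn x * v tn x)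
        - (∑ q, ω q * ∫ x in Ω (tq q), uh (tq q) x * deriv (fun s => v s x) (tq q))
        - (∑ q, ω q * ∫ x in Ω (tq q),
            uh (tq q) x * (inner ℝ (β (tq q) x) (gradient (v (tq q)) x) : ℝ))
        + (∑ q, ω q * ∫ x in Ω (tq q),
            D * (inner ℝ (gradient (uh (tq q)) x) (gradient (v (tq q)) x) : ℝ)))
      + (∑ q, ω q * ∑ F ∈ 𝓕, ∑ i ∈ Finset.Icc 1 m,
          τ F i * h ^ (2 * i - 1) *
            ∫ x, (dirDerivIter (nF F) i (uhRep F 0 (tq q)) x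
                    - dirDerivIter (nF F) i (uhRep F 1 (tq q)) x)
                * (dirDerivIter (nF F) i (vRep F 0 (tq q)) x
                    - dirDerivIter (nF F) i (vRep F 1 (tq q)) x) ∂(σF F))
      = (∫ x in Ω tnm1, uhm x * v tnm1 x)
        + ∑ q, ω q * ∫ x in Ω (tq q), f (tq q) x * v (tq q) x) :
    (∫ x in Ω tn, uh tn x) - (∫ x in Ω tnm1, uhm x)
      = ∑ q, ω q * ∫ x in Ω (tq q), f (tq q) x :=
  cutfem_quadrature_mass_conservation_general d tnm1 tn Nt tq ω Ω β D f uhm uh ι 𝓕 nF σF m τ h uhRep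
    v hv vRep hvRep hscheme
end
end

section
/- Discrete conservation of total (bulk plus surface) mass for the conservative coupled bulk–surface scheme: suppose the discrete pair u_h = (u_B, u_S) satisfies the scheme equation A^n(u_h, v) + S^n(u_h, v) = L^n(v) for the constant test pair v = (v_B, v_S) = (1, 1), whose elementwise representatives are the constant polynomial 1. Since ∂ₜ1 = 0, all spatial (and tangential) gradients of 1 vanish, all jumps of normal derivatives of the constant function vanish, and the nonlinear coupling term carries the factor v_B − v_S = 0, it follows that [∫_{Ω(t_n)} u_B(t_n,x) dx + ∫_{Γ(t_n)} u_S(t_n,s) dσ_{t_n}(s)] − [∫_{Ω(t_{n−1})} u_B^-(x) dx + ∫_{Γ(t_{n−1})} u_S^-(s) dσ_{t_{n−1}}(s)] = ∫_{t_{n−1}}^{t_n} ( ∫_{Ω(t)} f_B(t,x) dx + ∫_{Γ(t)} f_S(t,s) dσ_t(s) ) dt. -/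
/-!
Testing the scheme with the constant pair `v = (1, 1)` kills every term of `Aⁿ + Sⁿ` except the
two end-time masses: time derivatives, gradients, tangential gradients and normal derivatives of
a constant vanish, the coupling term carries the factor `v_B − v_S = 0`, and the face jumps of
`v` vanish because both representatives are the same function. What is left of `Lⁿ(v)` is the
initial mass plus the integrated sources.
-/

open MeasureTheory

noncomputable section

/-- First-order directional derivative in the direction of a varying field `n`. -/
noncomputable def dirDerivField {d : ℕ} (n : Euc d → Euc d) (g : Euc d → ℝ) : Euc d → ℝ :=
  fun x => fderiv ℝ g x (n x)

/-- `i`-th order directional derivative in the direction of a varying field `n`. -/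
noncomputable def dirDerivFieldIter {d : ℕ} (n : Euc d → Euc d) (i : ℕ)
    (g : Euc d → ℝ) : Euc d → ℝ :=
  (dirDerivField n)^[i] g

/-- Tangential gradient with respect to the unit normal field `n`:
`∇_Γ g = ∇g − ⟨∇g, n⟩ n`. -/
noncomputable def tangGrad {d : ℕ} (n : Euc d → Euc d) (g : Euc d → ℝ) (x : Euc d) :
    Euc d :=
  gradient g x - (inner ℝ (gradient g x) (n x) : ℝ) • n x

theorem Function.iterate_succ_apply_eq_of_map_fixed {α : Type*} {f : α → α} {x y : α}
    (hx : f x = y) (hy : f y = y) (n : ℕ) : f^[n + 1] x = y := by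
  rw [Function.iterate_succ_apply, hx, Function.iterate_fixed hy]

theorem dirDerivField_const {d : ℕ} (n : Euc d → Euc d) (c : ℝ) :
    dirDerivField n (fun _ => c) = fun _ => 0 := by
  funext x
  simp [dirDerivField]

theorem dirDerivFieldIter_const {d : ℕ} (n : Euc d → Euc d) (c : ℝ) {i : ℕ} (hi : i ≠ 0) :
    dirDerivFieldIter n i (fun _ => c) = fun _ => 0 := by
  obtain ⟨k, rfl⟩ := Nat.exists_eq_succ_of_ne_zero hi
  exact Function.iterate_succ_apply_eq_of_map_fixed (dirDerivField_const n c)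
    (dirDerivField_const n 0) k

theorem tangGrad_const {d : ℕ} (n : Euc d → Euc d) (c : ℝ) :
    tangGrad n (fun _ => c) = fun _ => 0 := by
  funext x
  simp [tangGrad]

theorem coupled_bulk_surface_mass_conservation_general
    (d : ℕ)
    (tnm1 tn : ℝ)
    -- evolving bulk domains and surfaces
    (Ω : ℝ → Set (Euc d))
    -- surface measures: (d−1)-dimensional Hausdorff measure restricted to Γ(s), finite
    (σ : ℝ → Measure (Euc d))
    -- bounded continuous velocity field
    (β : ℝ → Euc d → Euc d)
    -- diffusion coefficients
    (D DΓ : ℝ)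
    -- integrable source terms
    (fB fS : ℝ → Euc d → ℝ)
    (hfBint : IntervalIntegrable (fun s => ∫ x in Ω s, fB s x) volume tnm1 tn)
    (hfSint : IntervalIntegrable (fun s => ∫ x, fS s x ∂(σ s)) volume tnm1 tn)
    -- initial data from the previous slab
    (uBm uSm : Euc d → ℝ)
    -- discrete solutions, C¹ on each space-time element, integrable at tₙ
    (uB uS : ℝ → Euc d → ℝ)
    -- unit normal field on Γ(t)
    (nΓ : ℝ → Euc d → Euc d)
    -- bulk faces and surface faces with normals, measures and parameters
    (ιB ιS : Type) (𝓕B : Finset ιB) (𝓕S : Finset ιS)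
    (nFB : ιB → Euc d)
    (nFS : ιS → Euc d)
    (σFB : ιB → Measure (Euc d)) (σFS : ιS → Measure (Euc d))
    (m : ℕ) (τB : ιB → ℕ → ℝ) (τS : ιS → ℕ → ℝ) (τΓ : ℕ → ℝ)
    (h : ℝ)
    -- the two smooth elementwise representatives of u_B, u_S on the elements sharing a face
    (uBRep : ιB → Fin 2 → ℝ → Euc d → ℝ) (uSRep : ιS → Fin 2 → ℝ → Euc d → ℝ)
    -- the constant test pair v = (v_B, v_S) = (1, 1), with representatives ≡ 1
    (vB vS : ℝ → Euc d → ℝ)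
    (hvB : ∀ (t : ℝ) (x : Euc d), vB t x = 1)
    (hvS : ∀ (t : ℝ) (x : Euc d), vS t x = 1)
    (vBRep : ιB → Fin 2 → ℝ → Euc d → ℝ) (vSRep : ιS → Fin 2 → ℝ → Euc d → ℝ)
    (hvBRep : ∀ (F : ιB) (j : Fin 2) (t : ℝ) (x : Euc d), vBRep F j t x = 1)
    (hvSRep : ∀ (F : ιS) (j : Fin 2) (t : ℝ) (x : Euc d), vSRep F j t x = 1)
    -- the scheme equation Aⁿ(u_h, v) + Sⁿ(u_h, v) = Lⁿ(v) for this v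
    (hscheme :
      -- Aⁿ(u, v)
      ((∫ x in Ω tn, uB tn x * vB tn x)
        + (∫ x, uS tn x * vS tn x ∂(σ tn))
        - (∫ t in tnm1..tn, ∫ x in Ω t, uB t x * deriv (fun s => vB s x) t)
        - (∫ t in tnm1..tn, ∫ x, uS t x * deriv (fun s => vS s x) t ∂(σ t))
        - (∫ t in tnm1..tn, ∫ x in Ω t,
            uB t x * (inner ℝ (β t x) (gradient (vB t) x) : ℝ))
        - (∫ t in tnm1..tn, ∫ x,
            uS t x * (inner ℝ (β t x) (gradient (vS t) x) : ℝ) ∂(σ t))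
        + (∫ t in tnm1..tn, ∫ x in Ω t,
            D * (inner ℝ (gradient (uB t) x) (gradient (vB t) x) : ℝ))
        + (∫ t in tnm1..tn, ∫ x,
            DΓ * (inner ℝ (tangGrad (nΓ t) (uS t) x) (tangGrad (nΓ t) (vS t) x) : ℝ) ∂(σ t))
        + (∫ t in tnm1..tn, ∫ x,
            (uB t x - uS t x - uB t x * uS t x) * (vB t x - vS t x) ∂(σ t)))
      -- Sⁿ(u, v)
      + (∫ t in tnm1..tn,
          ((∑ F ∈ 𝓕B, ∑ i ∈ Finset.Icc 1 m,
              τB F i * h ^ (2 * i - 1) *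
                ∫ x, (dirDerivIter (nFB F) i (uBRep F 0 t) x
                        - dirDerivIter (nFB F) i (uBRep F 1 t) x)
                    * (dirDerivIter (nFB F) i (vBRep F 0 t) x
                        - dirDerivIter (nFB F) i (vBRep F 1 t) x) ∂(σFB F))
            + (∑ F ∈ 𝓕S, ∑ i ∈ Finset.Icc 1 m,
                τS F i * h ^ (2 * i - 2) *
                  ∫ x, (dirDerivIter (nFS F) i (uSRep F 0 t) x
                          - dirDerivIter (nFS F) i (uSRep F 1 t) x)
                      * (dirDerivIter (nFS F) i (vSRep F 0 t) x
                          - dirDerivIter (nFS F) i (vSRep F 1 t) x) ∂(σFS F))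
            + (∑ i ∈ Finset.Icc 1 m,
                τΓ i * h ^ (2 * i - 2) *
                  ∫ x, dirDerivFieldIter (nΓ t) i (uS t) x
                      * dirDerivFieldIter (nΓ t) i (vS t) x ∂(σ t))))
      -- Lⁿ(v)
      = (∫ x in Ω tnm1, uBm x * vB tnm1 x)
        + (∫ x, uSm x * vS tnm1 x ∂(σ tnm1))
        + (∫ t in tnm1..tn, ∫ x in Ω t, fB t x * vB t x)
        + (∫ t in tnm1..tn, ∫ x, fS t x * vS t x ∂(σ t))) :
    ((∫ x in Ω tn, uB tn x) + (∫ x, uS tn x ∂(σ tn)))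
      - ((∫ x in Ω tnm1, uBm x) + (∫ x, uSm x ∂(σ tnm1)))
      = ∫ t in tnm1..tn,
          ((∫ x in Ω t, fB t x) + (∫ x, fS t x ∂(σ t))) := by
  obtain rfl : vB = fun _ _ => 1 := funext₂ hvB
  obtain rfl : vS = fun _ _ => 1 := funext₂ hvS
  obtain rfl : vBRep = fun _ _ _ _ => 1 := by funext F j t x; exact hvBRep F j t x
  obtain rfl : vSRep = fun _ _ _ _ => 1 := by funext F j t x; exact hvSRep F j t x
  have normal_stabilization_eq_zero : ∀ t, (∑ i ∈ Finset.Icc 1 m, τΓ i * h ^ (2 * i - 2) *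
      ∫ x, dirDerivFieldIter (nΓ t) i (uS t) x
        * dirDerivFieldIter (nΓ t) i (fun _ => 1) x ∂(σ t)) = 0 := fun t =>
    Finset.sum_eq_zero fun i hi => by
      rw [dirDerivFieldIter_const (nΓ t) 1 (Nat.one_le_iff_ne_zero.mp (Finset.mem_Icc.mp hi).1)]
      simp only [mul_zero, integral_zero]
  simp only [normal_stabilization_eq_zero, deriv_const', gradient_fun_const, tangGrad_const,
    inner_zero_right, sub_zero, sub_self, mul_zero, mul_one, integral_zero,
    Finset.sum_const_zero, intervalIntegral.integral_zero, add_zero] at hscheme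
  rw [intervalIntegral.integral_add hfBint hfSint]
  linarith

/-- Discrete conservation of total (bulk plus surface) mass for the conservative coupled
bulk–surface scheme: testing `Aⁿ(u_h,v) + Sⁿ(u_h,v) = Lⁿ(v)` with the constant test
pair `v = (1,1)` yields
`[∫_{Ω(tₙ)} u_B + ∫_{Γ(tₙ)} u_S] − [∫_{Ω(tₙ₋₁)} u_B⁻ + ∫_{Γ(tₙ₋₁)} u_S⁻]
  = ∫_{Iₙ} (∫_{Ω(t)} f_B + ∫_{Γ(t)} f_S) dt`. -/
theorem coupled_bulk_surface_mass_conservation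
    (d : ℕ) (hd : 1 ≤ d)
    (tnm1 tn : ℝ) (htn : tnm1 < tn)
    -- evolving bulk domains and surfaces
    (Ω : ℝ → Set (Euc d))
    (hΩ : ∀ s ∈ Set.Icc tnm1 tn, Bornology.IsBounded (Ω s) ∧ MeasurableSet (Ω s))
    (Γ : ℝ → Set (Euc d))
    (hΓ : ∀ s ∈ Set.Icc tnm1 tn, MeasurableSet (Γ s))
    -- surface measures: (d−1)-dimensional Hausdorff measure restricted to Γ(s), finite
    (σ : ℝ → Measure (Euc d))
    (hσ : ∀ s : ℝ, σ s = (μH[(d : ℝ) - 1] : Measure (Euc d)).restrict (Γ s))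
    (hσfin : ∀ s ∈ Set.Icc tnm1 tn, σ s Set.univ < ⊤)
    -- bounded continuous velocity field
    (β : ℝ → Euc d → Euc d)
    (hβcont : Continuous fun p : ℝ × Euc d => β p.1 p.2)
    (hβbdd : ∃ C : ℝ, ∀ (t : ℝ) (x : Euc d), ‖β t x‖ ≤ C)
    -- diffusion coefficients
    (D DΓ : ℝ) (hD : 0 < D) (hDΓ : 0 < DΓ)
    -- integrable source terms
    (fB fS : ℝ → Euc d → ℝ)
    (hfB : ∀ s ∈ Set.Icc tnm1 tn, IntegrableOn (fB s) (Ω s))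
    (hfS : ∀ s ∈ Set.Icc tnm1 tn, Integrable (fS s) (σ s))
    (hfBint : IntervalIntegrable (fun s => ∫ x in Ω s, fB s x) volume tnm1 tn)
    (hfSint : IntervalIntegrable (fun s => ∫ x, fS s x ∂(σ s)) volume tnm1 tn)
    -- initial data from the previous slab
    (uBm uSm : Euc d → ℝ)
    (huBm : IntegrableOn uBm (Ω tnm1)) (huSm : Integrable uSm (σ tnm1))
    -- discrete solutions, C¹ on each space-time element, integrable at tₙ
    (uB uS : ℝ → Euc d → ℝ)
    (𝓚 : Finset (Set (ℝ × Euc d)))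
    (huBC1 : ∀ K ∈ 𝓚, ContDiffOn ℝ 1 (fun p : ℝ × Euc d => uB p.1 p.2) K)
    (huSC1 : ∀ K ∈ 𝓚, ContDiffOn ℝ 1 (fun p : ℝ × Euc d => uS p.1 p.2) K)
    (huBint : IntegrableOn (uB tn) (Ω tn)) (huSint : Integrable (uS tn) (σ tn))
    -- unit normal field on Γ(t)
    (nΓ : ℝ → Euc d → Euc d)
    (hnΓ : ∀ (s : ℝ), ∀ x ∈ Γ s, ‖nΓ s x‖ = 1)
    -- bulk faces and surface faces with normals, measures and parameters
    (ιB ιS : Type) (𝓕B : Finset ιB) (𝓕S : Finset ιS)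
    (nFB : ιB → Euc d) (hnFB : ∀ F, ‖nFB F‖ = 1)
    (nFS : ιS → Euc d) (hnFS : ∀ F, ‖nFS F‖ = 1)
    (σFB : ιB → Measure (Euc d)) (σFS : ιS → Measure (Euc d))
    (m : ℕ) (τB : ιB → ℕ → ℝ) (τS : ιS → ℕ → ℝ) (τΓ : ℕ → ℝ)
    (hτB : ∀ F i, 0 < τB F i) (hτS : ∀ F i, 0 < τS F i) (hτΓ : ∀ i, 0 < τΓ i)
    (h : ℝ) (hh : 0 < h)
    -- the two smooth elementwise representatives of u_B, u_S on the elements sharing a face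
    (uBRep : ιB → Fin 2 → ℝ → Euc d → ℝ) (uSRep : ιS → Fin 2 → ℝ → Euc d → ℝ)
    -- the constant test pair v = (v_B, v_S) = (1, 1), with representatives ≡ 1
    (vB vS : ℝ → Euc d → ℝ)
    (hvB : ∀ (t : ℝ) (x : Euc d), vB t x = 1)
    (hvS : ∀ (t : ℝ) (x : Euc d), vS t x = 1)
    (vBRep : ιB → Fin 2 → ℝ → Euc d → ℝ) (vSRep : ιS → Fin 2 → ℝ → Euc d → ℝ)
    (hvBRep : ∀ (F : ιB) (j : Fin 2) (t : ℝ) (x : Euc d), vBRep F j t x = 1)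
    (hvSRep : ∀ (F : ιS) (j : Fin 2) (t : ℝ) (x : Euc d), vSRep F j t x = 1)
    -- the scheme equation Aⁿ(u_h, v) + Sⁿ(u_h, v) = Lⁿ(v) for this v
    (hscheme :
      -- Aⁿ(u, v)
      ((∫ x in Ω tn, uB tn x * vB tn x)
        + (∫ x, uS tn x * vS tn x ∂(σ tn))
        - (∫ t in tnm1..tn, ∫ x in Ω t, uB t x * deriv (fun s => vB s x) t)
        - (∫ t in tnm1..tn, ∫ x, uS t x * deriv (fun s => vS s x) t ∂(σ t))
        - (∫ t in tnm1..tn, ∫ x in Ω t,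
            uB t x * (inner ℝ (β t x) (gradient (vB t) x) : ℝ))
        - (∫ t in tnm1..tn, ∫ x,
            uS t x * (inner ℝ (β t x) (gradient (vS t) x) : ℝ) ∂(σ t))
        + (∫ t in tnm1..tn, ∫ x in Ω t,
            D * (inner ℝ (gradient (uB t) x) (gradient (vB t) x) : ℝ))
        + (∫ t in tnm1..tn, ∫ x,
            DΓ * (inner ℝ (tangGrad (nΓ t) (uS t) x) (tangGrad (nΓ t) (vS t) x) : ℝ) ∂(σ t))
        + (∫ t in tnm1..tn, ∫ x,
            (uB t x - uS t x - uB t x * uS t x) * (vB t x - vS t x) ∂(σ t)))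
      -- Sⁿ(u, v)
      + (∫ t in tnm1..tn,
          ((∑ F ∈ 𝓕B, ∑ i ∈ Finset.Icc 1 m,
              τB F i * h ^ (2 * i - 1) *
                ∫ x, (dirDerivIter (nFB F) i (uBRep F 0 t) x
                        - dirDerivIter (nFB F) i (uBRep F 1 t) x)
                    * (dirDerivIter (nFB F) i (vBRep F 0 t) x
                        - dirDerivIter (nFB F) i (vBRep F 1 t) x) ∂(σFB F))
            + (∑ F ∈ 𝓕S, ∑ i ∈ Finset.Icc 1 m,
                τS F i * h ^ (2 * i - 2) *
                  ∫ x, (dirDerivIter (nFS F) i (uSRep F 0 t) x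
                          - dirDerivIter (nFS F) i (uSRep F 1 t) x)
                      * (dirDerivIter (nFS F) i (vSRep F 0 t) x
                          - dirDerivIter (nFS F) i (vSRep F 1 t) x) ∂(σFS F))
            + (∑ i ∈ Finset.Icc 1 m,
                τΓ i * h ^ (2 * i - 2) *
                  ∫ x, dirDerivFieldIter (nΓ t) i (uS t) x
                      * dirDerivFieldIter (nΓ t) i (vS t) x ∂(σ t))))
      -- Lⁿ(v)
      = (∫ x in Ω tnm1, uBm x * vB tnm1 x)
        + (∫ x, uSm x * vS tnm1 x ∂(σ tnm1))
        + (∫ t in tnm1..tn, ∫ x in Ω t, fB t x * vB t x)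
        + (∫ t in tnm1..tn, ∫ x, fS t x * vS t x ∂(σ t))) :
    ((∫ x in Ω tn, uB tn x) + (∫ x, uS tn x ∂(σ tn)))
      - ((∫ x in Ω tnm1, uBm x) + (∫ x, uSm x ∂(σ tnm1)))
      = ∫ t in tnm1..tn,
          ((∫ x in Ω t, fB t x) + (∫ x, fS t x ∂(σ t))) :=
  coupled_bulk_surface_mass_conservation_general d tnm1 tn Ω σ β D DΓ fB fS hfBint hfSint uBm uSm uB
    uS nΓ ιB ιS 𝓕B 𝓕S nFB nFS σFB σFS m τB τS τΓ h uBRep uSRep vB vS hvB hvS vBRep vSRep hvBRep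
    hvSRep hscheme
end
end
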